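/- Let n, l, m, k, D be natural numbers with D ≥ 2, let b > 2 and δ > 0 be reals, and ε, ε' ∈ (0,1). Suppose Cond : {0,1}^n → ({0,1}^l)^D is a function such that for every (n,δn)-source Y, the distribution Cond(Y) is ε'-close to a convex combination of distributions on ({0,1}^l)^D in each of which at least one of the D coordinates has min-entropy at least (b/(b+1))l. Let t = ⌈log₂ D⌉ and suppose nmExt : {0,1}^n × {0,1}^{l+t} → {0,1}^m is a (D−1,k,ε)-non-malleable extractor. Define TExt : {0,1}^n × {0,1}^n → {0,1}^m by TExt(x,y) = ⊕_{j=1}^{D} nmExt(x, Cond(y)_j ∘ bin(j−1)), where bin(j−1) is the t-bit binary representation of j−1, ∘ denotes concatenation, and ⊕ is bitwise XOR. Then for every (n,δn)-source Y and every (n,k)-source X independent of Y, the distribution TExt(X,Y) is (ε' + 2^{l+t−(b/(b+1))l}·ε)-close to U_m. -/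

import Mathlib

open Finset
open scoped Classical

noncomputable section

abbrev BS (n : ℕ) := Fin n → Bool

def uniformD (α : Type*) [Fintype α] : α → ℝ := fun _ => (Fintype.card α : ℝ)⁻¹

def prodD {α β : Type*} (p : α → ℝ) (q : β → ℝ) : α × β → ℝ := fun z => p z.1 * q z.2

def pushD {α β : Type*} [Fintype α] (f : α → β) (p : α → ℝ) : β → ℝ :=
  fun b => ∑ a, if f a = b then p a else 0

def SD {α : Type*} [Fintype α] (p q : α → ℝ) : ℝ := (∑ a, |p a - q a|) / 2

def IsDist {α : Type*} [Fintype α] (p : α → ℝ) : Prop := (∀ a, 0 ≤ p a) ∧ ∑ a, p a = 1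

def mEntGe {α : Type*} (p : α → ℝ) (k : ℝ) : Prop := ∀ a, p a ≤ (2:ℝ) ^ (-k)

def IsNME {X Y M : Type*} [Fintype X] [Fintype Y] [Fintype M]
    (E : X → Y → M) (k ε : ℝ) : Prop :=
  ∀ μX : X → ℝ, IsDist μX → mEntGe μX k →
    ∀ A : Y → Y, (∀ y, A y ≠ y) →
      SD (pushD (fun xy : X × Y => (E xy.1 xy.2, E xy.1 (A xy.2), xy.2)) (prodD μX (uniformD Y)))
         (prodD (uniformD M)
           (pushD (fun xy : X × Y => (E xy.1 (A xy.2), xy.2)) (prodD μX (uniformD Y)))) ≤ ε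

def IsNMEr {X Y M : Type*} [Fintype X] [Fintype Y] [Fintype M]
    (r : ℕ) (E : X → Y → M) (k ε : ℝ) : Prop :=
  ∀ μX : X → ℝ, IsDist μX → mEntGe μX k →
    ∀ A : Fin r → Y → Y, (∀ i y, A i y ≠ y) →
      SD (pushD (fun xy : X × Y =>
            (E xy.1 xy.2, fun i => E xy.1 (A i xy.2), xy.2)) (prodD μX (uniformD Y)))
         (prodD (uniformD M)
           (pushD (fun xy : X × Y =>
             ((fun i => E xy.1 (A i xy.2)), xy.2)) (prodD μX (uniformD Y)))) ≤ ε

/-- XOR of a finite family of bits. -/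
def bXor {D : ℕ} (g : Fin D → Bool) : Bool :=
  decide ((∑ j, (if g j then (1 : ZMod 2) else 0)) = 1)

/-- The `t`-bit binary representation of `j`. -/
def binRep (D t : ℕ) (j : Fin D) : BS t := fun i => Nat.testBit (j : ℕ) (i : ℕ)


/-!
Write `G(x, v) = ⊕_j nmExt(x, v_j ∘ bin j)`, so that `TExt(X, Y) = G(X, Cond Y)`. Replacing
`Cond Y` by the mixture costs `ε'` (data processing), and by convexity it suffices to treat one
component `P` with a coordinate `j` whose block has min-entropy `h = (b/(b+1)) l`.

For fixed `v`, `G(X, v) = nmExt(X, v_j ∘ bin j) ⊕ R`, with `R` the XOR of the other `D - 1` terms.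
XOR with an independent string maps uniform to uniform, so the distance of `G(X, v)` from uniform
is at most the non-malleability distance at the seed `v_j ∘ bin j` against the seeds
`v_j' ∘ bin j'`, which differ from it in their tag. Choosing for each value `a` of the good block a worst
completion `v` with `v_j = a` turns these into a tampering function of the seed, and the extractor
property bounds the average over uniform seeds by `ε`. The good seed has probability at most
`2^(-h)` at each of the `2^(l+t)` seeds, so its average is at most `2^(l+t-h) ε`.
-/

section Distributions

variable {α β γ : Type*}

lemma SD_nonneg [Fintype α] (p q : α → ℝ) : 0 ≤ SD p q := by
  unfold SD; positivity

lemma SD_triangle [Fintype α] (p q r : α → ℝ) : SD p r ≤ SD p q + SD q r := by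
  unfold SD
  rw [← add_div, ← Finset.sum_add_distrib]
  gcongr with a
  exact abs_sub_le _ _ _

lemma pushD_apply_eq_sum_filter [Fintype α] (f : α → β) (p : α → ℝ) (b : β) :
    pushD f p b = ∑ a ∈ univ.filter (fun a => f a = b), p a := by
  rw [Finset.sum_filter]; rfl

lemma SD_pushD_le [Fintype α] [Fintype β] (f : α → β) (p q : α → ℝ) :
    SD (pushD f p) (pushD f q) ≤ SD p q := by
  unfold SD
  gcongr
  calc ∑ b, |pushD f p b - pushD f q b|
      = ∑ b, |∑ a ∈ univ.filter (fun a => f a = b), (p a - q a)| := by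
        simp only [pushD_apply_eq_sum_filter, Finset.sum_sub_distrib]
    _ ≤ ∑ b, ∑ a ∈ univ.filter (fun a => f a = b), |p a - q a| := by
        gcongr; exact Finset.abs_sum_le_sum_abs _ _
    _ = ∑ a, |p a - q a| := Finset.sum_fiberwise _ _ _

lemma sum_pushD [Fintype α] [Fintype β] (f : α → β) (p : α → ℝ) :
    ∑ b, pushD f p b = ∑ a, p a := by
  simp only [pushD_apply_eq_sum_filter]
  exact Finset.sum_fiberwise _ _ _

lemma pushD_pushD [Fintype α] [Fintype β] (f : α → β) (g : β → γ) (p : α → ℝ) :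
    pushD g (pushD f p) = pushD (g ∘ f) p := by
  funext c
  simp only [pushD, Function.comp_apply, ite_sum_zero]
  rw [Finset.sum_comm]
  refine Finset.sum_congr rfl fun a _ => ?_
  rw [Finset.sum_eq_single (f a)] <;> grind

lemma pushD_equiv_apply [Fintype α] (e : α ≃ β) (p : α → ℝ) (b : β) :
    pushD e p b = p (e.symm b) := by
  unfold pushD
  rw [Finset.sum_eq_single (e.symm b)] <;> grind

lemma prodD_pushD [Fintype α] [Fintype β] (p : α → ℝ) (g : β → γ) (q : β → ℝ) :
    prodD p (pushD g q) = pushD (Prod.map id g) (prodD p q) := by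
  funext ⟨x, c⟩
  simp only [prodD, pushD, Fintype.sum_prod_type, Prod.map, id, Prod.mk.injEq, Finset.mul_sum,
    mul_ite, mul_zero, ite_and]
  rw [Finset.sum_eq_single_of_mem x (mem_univ x)] <;> simp +contextual

lemma pushD_prodD_apply [Fintype α] [Fintype β] (G : α × β → γ) (μ : α → ℝ) (P : β → ℝ)
    (c : γ) : pushD G (prodD μ P) c = ∑ v, P v * pushD (fun x => G (x, v)) μ c := by
  simp only [pushD, prodD, Fintype.sum_prod_type, Finset.mul_sum]
  rw [Finset.sum_comm]
  refine Finset.sum_congr rfl fun v _ => Finset.sum_congr rfl fun x _ => ?_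
  split_ifs <;> ring

lemma pushD_perm_prodD_uniformD [Fintype α] [Fintype β] (σ : β → Equiv.Perm α) (q : β → ℝ)
    (hq : ∑ b, q b = 1) :
    pushD (fun z : α × β => σ z.2 z.1) (prodD (uniformD α) q) = uniformD α := by
  funext c
  simp only [pushD_prodD_apply, pushD_equiv_apply, uniformD, ← Finset.sum_mul, hq, one_mul]

lemma SD_prodD_left [Fintype α] [Fintype β] {p : α → ℝ} (hp : IsDist p) (q q' : β → ℝ) :
    SD (prodD p q) (prodD p q') = SD q q' := by
  unfold SD prodD
  simp only [Fintype.sum_prod_type, ← mul_sub, abs_mul, abs_of_nonneg (hp.1 _), ← Finset.mul_sum,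
    ← Finset.sum_mul, hp.2, one_mul]

lemma SD_convex [Fintype α] {ι : Type*} [Fintype ι] (w : ι → ℝ) (hw0 : ∀ i, 0 ≤ w i)
    (hw1 : ∑ i, w i = 1) (P : ι → α → ℝ) (U : α → ℝ) :
    SD (fun a => ∑ i, w i * P i a) U ≤ ∑ i, w i * SD (P i) U := by
  unfold SD
  simp only [mul_div_assoc', ← Finset.sum_div, Finset.mul_sum]
  gcongr
  calc ∑ a, |∑ i, w i * P i a - U a|
      = ∑ a, |∑ i, w i * (P i a - U a)| := by
        simp only [mul_sub, Finset.sum_sub_distrib, ← Finset.sum_mul, hw1, one_mul]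
    _ ≤ ∑ a, ∑ i, w i * |P i a - U a| := by
        gcongr with a
        refine (Finset.abs_sum_le_sum_abs _ _).trans_eq ?_
        simp only [abs_mul, abs_of_nonneg (hw0 _)]
    _ = _ := Finset.sum_comm

lemma isDist_mixture [Fintype α] {ι : Type*} [Fintype ι] {w : ι → ℝ} (hw0 : ∀ i, 0 ≤ w i)
    (hw1 : ∑ i, w i = 1) {P : ι → α → ℝ} (hP : ∀ i, IsDist (P i)) :
    IsDist fun a => ∑ i, w i * P i a := by
  refine ⟨fun a => Finset.sum_nonneg fun i _ => mul_nonneg (hw0 i) ((hP i).1 a), ?_⟩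
  rw [Finset.sum_comm]
  simp only [← Finset.mul_sum, (hP _).2, mul_one, hw1]

lemma sum_mixture_mul_le [Fintype α] {ι : Type*} [Fintype ι] {w : ι → ℝ} (hw0 : ∀ i, 0 ≤ w i)
    (hw1 : ∑ i, w i = 1) (P : ι → α → ℝ) (s : α → ℝ) {C : ℝ}
    (hC : ∀ i, ∑ a, P i a * s a ≤ C) :
    ∑ a, (∑ i, w i * P i a) * s a ≤ C :=
  calc ∑ a, (∑ i, w i * P i a) * s a = ∑ i, w i * ∑ a, P i a * s a := by
        simp only [Finset.sum_mul, Finset.mul_sum, mul_assoc]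
        exact Finset.sum_comm
    _ ≤ ∑ i, w i * C := Finset.sum_le_sum fun i _ => mul_le_mul_of_nonneg_left (hC i) (hw0 i)
    _ = C := by rw [← Finset.sum_mul, hw1, one_mul]

lemma SD_pushD_prodD_le [Fintype α] [Fintype β] [Fintype γ] (G : α × β → γ) (μ : α → ℝ)
    {P : β → ℝ} (hP0 : ∀ v, 0 ≤ P v) (hP1 : ∑ v, P v = 1) (U : γ → ℝ) :
    SD (pushD G (prodD μ P)) U ≤ ∑ v, P v * SD (pushD (fun x => G (x, v)) μ) U := by
  simp only [funext (pushD_prodD_apply G μ P)]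
  exact SD_convex P hP0 hP1 _ U

lemma exists_section_sum_mul_le [Fintype α] [Fintype β] {π : α → β}
    (hπ : Function.Surjective π) {P : α → ℝ} (hP : ∀ a, 0 ≤ P a) (F : α → ℝ) :
    ∃ w : β → α, (∀ b, π (w b) = b) ∧ ∑ a, P a * F a ≤ ∑ b, pushD π P b * F (w b) := by
  have hmax : ∀ b, ∃ a, π a = b ∧ ∀ a', π a' = b → F a' ≤ F a := by
    intro b
    obtain ⟨a, ha, hmax⟩ := Finset.exists_max_image (univ.filter (π · = b)) F
      ⟨(hπ b).choose, by simpa using (hπ b).choose_spec⟩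
    exact ⟨a, by simpa using ha, fun a' ha' => hmax a' (by simpa using ha')⟩
  choose w hwπ hw using hmax
  refine ⟨w, hwπ, ?_⟩
  calc ∑ a, P a * F a ≤ ∑ a, P a * F (w (π a)) := by
        gcongr with a
        · exact hP a
        · exact hw _ a rfl
    _ = ∑ b, pushD π P b * F (w b) := by
        simp only [pushD_apply_eq_sum_filter, Finset.sum_mul]
        refine (Finset.sum_fiberwise univ π _).symm.trans (Finset.sum_congr rfl fun b _ => ?_)
        exact Finset.sum_congr rfl fun a ha => by rw [(Finset.mem_filter.mp ha).2]

end Distributions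

section NonMalleable

variable {X Y M : Type*} [Fintype X] [Fintype M] {r : ℕ}

-- The distance in `IsNMEr` conditioned on the seed being `y`, with tampered seeds `z`.
def nmGapAt (E : X → Y → M) (μ : X → ℝ) (y : Y) (z : Fin r → Y) : ℝ :=
  SD (pushD (fun x => (E x y, fun i => E x (z i))) μ)
    (prodD (uniformD M) (pushD (fun x => fun i => E x (z i)) μ))

lemma pushD_prodD_keep_snd_apply {W : Type*} [Fintype Y] (F : X → Y → W) (μ : X → ℝ) (p : Y → ℝ)
    (w : W) (y : Y) :
    pushD (fun xy : X × Y => (F xy.1 xy.2, xy.2)) (prodD μ p) (w, y) =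
      p y * pushD (fun x => F x y) μ w := by
  simp only [pushD, prodD, Fintype.sum_prod_type, Prod.mk.injEq]
  rw [Finset.mul_sum]
  refine Finset.sum_congr rfl fun x _ => ?_
  rw [Finset.sum_eq_single y] <;> grind

lemma pushD_prodD_keep_snd_apply₂ {W W' : Type*} [Fintype Y] (F : X → Y → W) (H : X → Y → W')
    (μ : X → ℝ) (p : Y → ℝ) (w : W) (w' : W') (y : Y) :
    pushD (fun xy : X × Y => (F xy.1 xy.2, H xy.1 xy.2, xy.2)) (prodD μ p) (w, w', y) =
      p y * pushD (fun x => (F x y, H x y)) μ (w, w') := by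
  simp only [pushD, prodD, Fintype.sum_prod_type, Prod.mk.injEq]
  rw [Finset.mul_sum]
  refine Finset.sum_congr rfl fun x _ => ?_
  rw [Finset.sum_eq_single y] <;> grind

lemma SD_eq_sum_mul_SD_of_factor {A B : Type*} [Fintype A] [Fintype B] [Fintype Y]
    (P Q : A × B × Y → ℝ) {p : Y → ℝ} (hp : ∀ y, 0 ≤ p y) (P' Q' : Y → A × B → ℝ)
    (hP : ∀ a b y, P (a, b, y) = p y * P' y (a, b))
    (hQ : ∀ a b y, Q (a, b, y) = p y * Q' y (a, b)) :
    SD P Q = ∑ y, p y * SD (P' y) (Q' y) := by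
  simp only [SD, Fintype.sum_prod_type, hP, hQ, ← mul_sub, abs_mul, abs_of_nonneg (hp _),
    mul_div_assoc', ← Finset.sum_div, Finset.mul_sum]
  congr 1
  simp_rw [Finset.sum_comm (s := (univ : Finset B)), Finset.sum_comm (s := (univ : Finset A))]

lemma SD_nm_eq_sum_nmGapAt [Fintype Y] (E : X → Y → M) (A : Fin r → Y → Y) (μ : X → ℝ)
    {p : Y → ℝ} (hp : ∀ y, 0 ≤ p y) :
    SD (pushD (fun xy : X × Y => (E xy.1 xy.2, fun i => E xy.1 (A i xy.2), xy.2)) (prodD μ p))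
      (prodD (uniformD M)
        (pushD (fun xy : X × Y => ((fun i => E xy.1 (A i xy.2)), xy.2)) (prodD μ p))) =
    ∑ y, p y * nmGapAt E μ y (fun i => A i y) :=
  SD_eq_sum_mul_SD_of_factor _ _ hp _ _
    (fun a b y => pushD_prodD_keep_snd_apply₂ E (fun x y i => E x (A i y)) μ p a b y)
    (fun a b y => by
      simp only [prodD, pushD_prodD_keep_snd_apply (fun x y i => E x (A i y)) μ p b y]; ring)

theorem IsNMEr.sum_nmGapAt_le [Fintype Y] [Nontrivial Y] {E : X → Y → M} {k ε : ℝ}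
    (hE : IsNMEr r E k ε) {μ : X → ℝ} (hμ : IsDist μ) (hμk : mEntGe μ k)
    {S : Type*} [Fintype S] {ι : S → Y} (hι : Function.Injective ι) (z : S → Fin r → Y)
    (hz : ∀ s i, z s i ≠ ι s) :
    ∑ s, nmGapAt E μ (ι s) (z s) ≤ Fintype.card Y * ε := by
  let A : Fin r → Y → Y := fun i y =>
    Function.extend ι z (fun y _ => (exists_ne y).choose) y i
  have hA : ∀ s, (fun i => A i (ι s)) = z s := fun s => by
    funext i; simp only [A, hι.extend_apply]
  have hAne : ∀ i y, A i y ≠ y := by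
    intro i y
    by_cases hy : ∃ s, ι s = y
    · obtain ⟨s, rfl⟩ := hy
      exact (congrFun (hA s) i).trans_ne (hz s i)
    · simp only [A, Function.extend_apply' _ _ _ hy]
      exact (exists_ne y).choose_spec
  have hcard : (0 : ℝ) < Fintype.card Y := by exact_mod_cast Fintype.card_pos
  calc ∑ s, nmGapAt E μ (ι s) (z s)
      = ∑ y ∈ univ.map ⟨ι, hι⟩, nmGapAt E μ y (fun i => A i y) := by
        simp only [Finset.sum_map, Function.Embedding.coeFn_mk, hA]
    _ ≤ ∑ y, nmGapAt E μ y (fun i => A i y) :=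
        Finset.sum_le_univ_sum_of_nonneg fun _ => SD_nonneg _ _
    _ = Fintype.card Y * ∑ y, uniformD Y y * nmGapAt E μ y (fun i => A i y) := by
        simp only [uniformD, ← Finset.mul_sum, ← mul_assoc, mul_inv_cancel₀ hcard.ne', one_mul]
    _ ≤ Fintype.card Y * ε := by
        rw [← SD_nm_eq_sum_nmGapAt E A μ fun _ => by unfold uniformD; positivity]
        exact mul_le_mul_of_nonneg_left (hE μ hμ hμk A hAne) hcard.le

end NonMalleable

section XorExtractor

variable {n l t m : ℕ}

def xorPerm (c : BS m) : Equiv.Perm (BS m) :=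
  Function.Involutive.toPerm (fun a i => xor (a i) (c i)) fun a => by funext i; simp

lemma SD_xor_le_nmGapAt {X Y : Type*} [Fintype X] {r : ℕ} (E : X → Y → BS m) {μ : X → ℝ}
    (hμ : ∑ x, μ x = 1) (y : Y) (z : Fin r → Y) :
    SD (pushD (fun x b => xor (E x y b) (bXor fun i => E x (z i) b)) μ) (uniformD (BS m)) ≤
      nmGapAt E μ y z := by
  let σ : (Fin r → BS m) → Equiv.Perm (BS m) := fun os => xorPerm fun b => bXor fun i => os i b
  have hxor := pushD_perm_prodD_uniformD σ (pushD (fun x i => E x (z i)) μ)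
    (by rw [sum_pushD, hμ])
  unfold nmGapAt
  convert SD_pushD_le (fun o => σ o.2 o.1) (pushD (fun x => (E x y, fun i => E x (z i))) μ)
    (prodD (uniformD (BS m)) (pushD (fun x i => E x (z i)) μ)) using 1
  rw [pushD_pushD, hxor]
  rfl

lemma bXor_succAbove {r : ℕ} (g : Fin (r + 1) → Bool) (j : Fin (r + 1)) :
    bXor g = xor (g j) (bXor fun i => g (j.succAbove i)) := by
  unfold bXor
  rw [Fin.sum_univ_succAbove _ j]
  generalize g j = c
  generalize ∑ i : Fin r, (if g (j.succAbove i) then (1 : ZMod 2) else 0) = s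
  revert c s
  decide

lemma binRep_injective {D : ℕ} (hD : D ≤ 2 ^ t) : Function.Injective (binRep D t) := by
  intro j j' h
  refine Fin.ext (Nat.eq_of_testBit_eq fun i => ?_)
  by_cases hi : i < t
  · exact congrFun h ⟨i, hi⟩
  · have hpow : 2 ^ t ≤ 2 ^ i := Nat.pow_le_pow_right two_pos (not_lt.mp hi)
    rw [Nat.testBit_lt_two_pow (by omega), Nat.testBit_lt_two_pow (by omega)]

def tagSeed {D : ℕ} (t : ℕ) (j : Fin D) (a : BS l) : BS (l + t) := Fin.append a (binRep D t j)

lemma tagSeed_injective {D : ℕ} (j : Fin D) : Function.Injective (tagSeed (l := l) t j) :=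
  fun a a' h => congrArg Prod.fst
    ((Fin.appendEquiv l t).injective (a₁ := (a, binRep D t j)) (a₂ := (a', binRep D t j)) h)

lemma tagSeed_ne {D : ℕ} (hD : D ≤ 2 ^ t) {j j' : Fin D} (hj : j ≠ j') (a a' : BS l) :
    tagSeed t j a ≠ tagSeed t j' a' :=
  fun h => hj <| binRep_injective hD <| congrArg Prod.snd
    ((Fin.appendEquiv l t).injective (a₁ := (a, binRep D t j)) (a₂ := (a', binRep D t j')) h)

def xorExt {D : ℕ} (E : BS n → BS (l + t) → BS m) (x : BS n) (v : Fin D → BS l) : BS m :=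
  fun b => bXor fun j => E x (tagSeed t j (v j)) b

lemma xorExt_eq_xor {r : ℕ} (E : BS n → BS (l + t) → BS m) (x : BS n)
    (v : Fin (r + 1) → BS l) (j : Fin (r + 1)) :
    xorExt E x v = fun b => xor (E x (tagSeed t j (v j)) b)
      (bXor fun i => E x (tagSeed t (j.succAbove i) (v (j.succAbove i))) b) :=
  funext fun _ => bXor_succAbove _ j

lemma card_BS_eq_rpow (s : ℕ) : (Fintype.card (BS s) : ℝ) = (2 : ℝ) ^ (s : ℝ) := by
  simp [Real.rpow_natCast]

theorem sum_mul_SD_xorExt_le {r : ℕ} (hr : r + 1 ≤ 2 ^ t) (hlt : 0 < l + t)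
    {E : BS n → BS (l + t) → BS m} {k ε : ℝ} (hE : IsNMEr r E k ε)
    {μ : BS n → ℝ} (hμ : IsDist μ) (hμk : mEntGe μ k)
    {P : (Fin (r + 1) → BS l) → ℝ} (hP : ∀ v, 0 ≤ P v) {j : Fin (r + 1)} {h : ℝ}
    (hPj : mEntGe (pushD (fun v => v j) P) h) :
    ∑ v, P v * SD (pushD (fun x => xorExt E x v) μ) (uniformD (BS m)) ≤
      (2 : ℝ) ^ ((l : ℝ) + t - h) * ε := by
  have : Nonempty (Fin (l + t)) := ⟨⟨0, hlt⟩⟩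
  let z : (Fin (r + 1) → BS l) → Fin r → BS (l + t) := fun v i =>
    tagSeed t (j.succAbove i) (v (j.succAbove i))
  let F : (Fin (r + 1) → BS l) → ℝ := fun v => nmGapAt E μ (tagSeed t j (v j)) (z v)
  have hSD : ∀ v, SD (pushD (fun x => xorExt E x v) μ) (uniformD (BS m)) ≤ F v := fun v => by
    simp only [xorExt_eq_xor E _ v j]
    exact SD_xor_le_nmGapAt E hμ.2 _ _
  obtain ⟨w, hwj, hw⟩ :=
    exists_section_sum_mul_le (π := fun v => v j) (fun a => ⟨fun _ => a, rfl⟩) hP F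
  have hgap : ∑ a, F (w a) ≤ Fintype.card (BS (l + t)) * ε := by
    have := hE.sum_nmGapAt_le hμ hμk (tagSeed_injective j) (fun a => z (w a))
      fun a i => tagSeed_ne hr (j.succAbove_ne i) _ _
    simpa only [F, hwj] using this
  calc ∑ v, P v * SD (pushD (fun x => xorExt E x v) μ) (uniformD (BS m))
      ≤ ∑ v, P v * F v := by gcongr with v; exacts [hP v, hSD v]
    _ ≤ ∑ a, pushD (fun v => v j) P a * F (w a) := hw
    _ ≤ ∑ a, (2 : ℝ) ^ (-h) * F (w a) := by
        gcongr with a; exacts [SD_nonneg _ _, hPj a]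
    _ ≤ (2 : ℝ) ^ (-h) * (Fintype.card (BS (l + t)) * ε) := by
        rw [← Finset.mul_sum]; gcongr
    _ = (2 : ℝ) ^ ((l : ℝ) + t - h) * ε := by
        rw [card_BS_eq_rpow, ← mul_assoc, ← Real.rpow_add two_pos]
        congr 2
        push_cast
        ring

end XorExtractor

theorem stmt_8_general
    (n l m k D : ℕ) (hD : 2 ≤ D) (b δ : ℝ)
    (ε ε' : ℝ)
    (Cond : BS n → (Fin D → BS l))
    (hCond : ∀ μY : BS n → ℝ, IsDist μY → mEntGe μY (δ * n) →
      ∃ (t' : ℕ) (w : Fin t' → ℝ) (Di : Fin t' → ((Fin D → BS l) → ℝ)),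
        (∀ i, 0 ≤ w i) ∧ (∑ i, w i = 1) ∧ (∀ i, IsDist (Di i)) ∧
        (∀ i, ∃ j : Fin D, mEntGe (pushD (fun v => v j) (Di i)) ((b / (b + 1)) * l)) ∧
        SD (pushD Cond μY) (fun z => ∑ i, w i * Di i z) ≤ ε')
    (nmExt : BS n → BS (l + Nat.clog 2 D) → BS m)
    (hnm : IsNMEr (D - 1) nmExt (k:ℝ) ε) :
    ∀ (μX μY : BS n → ℝ),
      IsDist μX → mEntGe μX (k:ℝ) → IsDist μY → mEntGe μY (δ * n) →
      SD (pushD (fun xy : BS n × BS n => fun i : Fin m =>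
            bXor (fun j : Fin D =>
              nmExt xy.1 (Fin.append (Cond xy.2 j) (binRep D (Nat.clog 2 D) j)) i))
           (prodD μX μY))
         (uniformD (BS m))
        ≤ ε' + (2:ℝ) ^ ((l:ℝ) + (Nat.clog 2 D : ℝ) - (b / (b + 1)) * l) * ε := by
  intro μX μY hX hXk hY hYk
  obtain ⟨t', w, Di, hw0, hw1, hDi, hgood, hclose⟩ := hCond μY hY hYk
  obtain ⟨r, rfl⟩ : ∃ r, D = r + 1 := ⟨D - 1, by omega⟩
  have hr : r + 1 ≤ 2 ^ Nat.clog 2 (r + 1) := Nat.le_pow_clog one_lt_two _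
  have hlt : 0 < l + Nat.clog 2 (r + 1) := by
    have := Nat.clog_pos one_lt_two (by omega : 1 < r + 1); omega
  have hE : IsNMEr r nmExt k ε := by simpa using hnm
  have hmix := isDist_mixture hw0 hw1 hDi
  let G : BS n × (Fin (r + 1) → BS l) → BS m := fun xv => xorExt nmExt xv.1 xv.2
  change SD (pushD (G ∘ Prod.map id Cond) (prodD μX μY)) _ ≤ _
  rw [← pushD_pushD, ← prodD_pushD]
  refine (SD_triangle _ (pushD G (prodD μX fun v => ∑ i, w i * Di i v)) _).trans
    (add_le_add ?_ ?_)
  · refine (SD_pushD_le G _ _).trans ?_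
    rw [SD_prodD_left hX]
    exact hclose
  · exact (SD_pushD_prodD_le G μX hmix.1 hmix.2 _).trans <| sum_mixture_mul_le hw0 hw1 Di _
      fun i => sum_mul_SD_xorExt_le hr hlt hE hX hXk (hDi i).1 (hgood i).choose_spec

theorem stmt_8
    (n l m k D : ℕ) (hD : 2 ≤ D) (b δ : ℝ) (hb : 2 < b) (hδ : 0 < δ)
    (ε ε' : ℝ) (hε0 : 0 < ε) (hε1 : ε < 1) (hε'0 : 0 < ε') (hε'1 : ε' < 1)
    (Cond : BS n → (Fin D → BS l))
    (hCond : ∀ μY : BS n → ℝ, IsDist μY → mEntGe μY (δ * n) →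
      ∃ (t' : ℕ) (w : Fin t' → ℝ) (Di : Fin t' → ((Fin D → BS l) → ℝ)),
        (∀ i, 0 ≤ w i) ∧ (∑ i, w i = 1) ∧ (∀ i, IsDist (Di i)) ∧
        (∀ i, ∃ j : Fin D, mEntGe (pushD (fun v => v j) (Di i)) ((b / (b + 1)) * l)) ∧
        SD (pushD Cond μY) (fun z => ∑ i, w i * Di i z) ≤ ε')
    (nmExt : BS n → BS (l + Nat.clog 2 D) → BS m)
    (hnm : IsNMEr (D - 1) nmExt (k:ℝ) ε) :
    ∀ (μX μY : BS n → ℝ),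
      IsDist μX → mEntGe μX (k:ℝ) → IsDist μY → mEntGe μY (δ * n) →
      SD (pushD (fun xy : BS n × BS n => fun i : Fin m =>
            bXor (fun j : Fin D =>
              nmExt xy.1 (Fin.append (Cond xy.2 j) (binRep D (Nat.clog 2 D) j)) i))
           (prodD μX μY))
         (uniformD (BS m))
        ≤ ε' + (2:ℝ) ^ ((l:ℝ) + (Nat.clog 2 D : ℝ) - (b / (b + 1)) * l) * ε :=
  stmt_8_general n l m k D hD b δ ε ε' Cond hCond nmExt hnm

end
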